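/- (Generalized equal area principle, derivative identity.) Let F : ℝ → ℝ be C², let u : ℝ → ℝ be C¹, and define x(s,t) = s + F'(u(s))·t. Let s₀, s₁ be C¹ functions of t on an open interval I with x(s₀(t),t) = x(s₁(t),t) for all t ∈ I, and define the parametric area A(t) = ∫_{s₀(t)}^{s₁(t)} u(s)·∂_s x(s,t) ds. Then A is differentiable on I and A'(t) = (d/dt x(s₀(t),t))·(u(s₁(t)) − u(s₀(t))) + F(u(s₀(t))) − F(u(s₁(t))). -/

import Mathlib

open MeasureTheory Set

/-- The characteristic flow `x(s,t) = s + F'(u(s))·t`. -/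
noncomputable def flowX (F u : ℝ → ℝ) (s t : ℝ) : ℝ :=
  s + deriv F (u s) * t

/-- The parametric area `A = ∫_{s₀}^{s₁} u(s)·∂_s x(s,t) ds`. -/
noncomputable def parArea (F u : ℝ → ℝ) (s₀ s₁ t : ℝ) : ℝ :=
  ∫ s in s₀..s₁, u s * deriv (fun r => flowX F u r t) s

/-!
With `U` an antiderivative of `u` and `G(v) = v F'(v) - F(v)`, one has `G'(v) = v F''(v)`,
so `P(t, s) = U(s) + t G(u(s))` (`areaPotential`) satisfies `∂ₛ P(t, s) = u(s) ∂ₛ x(s, t)`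
and the parametric area is `P(t, s₁(t)) - P(t, s₀(t))`. Along a curve `s(t)` the chain rule gives
`d/dt P(t, s(t)) = u(s(t)) X'(t) - F(u(s(t)))` with `X(t) = x(s(t), t)`; the constraint
`X₀ = X₁` makes the two characteristic speeds agree, which yields the identity.
-/

noncomputable def areaPotential (F u : ℝ → ℝ) (t s : ℝ) : ℝ :=
  (∫ r in (0 : ℝ)..s, u r) + t * (u s * deriv F (u s) - F (u s))

variable {F u : ℝ → ℝ}

theorem hasDerivAt_flowX_left {s : ℝ} (hF : DifferentiableAt ℝ (deriv F) (u s))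
    (hu : DifferentiableAt ℝ u s) (t : ℝ) :
    HasDerivAt (fun r => flowX F u r t) (1 + deriv (deriv F) (u s) * deriv u s * t) s := by
  have hFu : HasDerivAt (fun r => deriv F (u r)) (deriv (deriv F) (u s) * deriv u s) s :=
    hF.hasDerivAt.comp s hu.hasDerivAt
  exact (hasDerivAt_id s).fun_add (hFu.mul_const t)

theorem hasDerivAt_flowX_comp {s : ℝ → ℝ} {t : ℝ} (hF : DifferentiableAt ℝ (deriv F) (u (s t)))
    (hu : DifferentiableAt ℝ u (s t)) (hs : DifferentiableAt ℝ s t) :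
    HasDerivAt (fun τ => flowX F u (s τ) τ)
      (deriv s t + deriv (deriv F) (u (s t)) * (deriv u (s t) * deriv s t) * t
        + deriv F (u (s t))) t := by
  have hus : HasDerivAt (fun τ => u (s τ)) (deriv u (s t) * deriv s t) t :=
    hu.hasDerivAt.comp t hs.hasDerivAt
  have hFus : HasDerivAt (fun τ => deriv F (u (s τ)))
      (deriv (deriv F) (u (s t)) * (deriv u (s t) * deriv s t)) t :=
    hF.hasDerivAt.comp (h := fun τ => u (s τ)) t hus
  refine (hs.hasDerivAt.fun_add (hFus.fun_mul (hasDerivAt_id t))).congr_deriv ?_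
  simp only [id_eq, mul_one]
  ring

theorem hasDerivAt_legendre {v : ℝ} (hF : DifferentiableAt ℝ F v)
    (hF' : DifferentiableAt ℝ (deriv F) v) :
    HasDerivAt (fun w => w * deriv F w - F w) (v * deriv (deriv F) v) v := by
  refine (((hasDerivAt_id v).fun_mul hF'.hasDerivAt).fun_sub hF.hasDerivAt).congr_deriv ?_
  simp only [id_eq]
  ring

theorem hasDerivAt_areaPotential_right (hF : Differentiable ℝ F)
    (hF' : Differentiable ℝ (deriv F)) (hu : Differentiable ℝ u) (t s : ℝ) :
    HasDerivAt (areaPotential F u t) (u s * deriv (fun r => flowX F u r t) s) s := by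
  have hG : HasDerivAt (fun r => u r * deriv F (u r) - F (u r))
      (u s * deriv (deriv F) (u s) * deriv u s) s :=
    (hasDerivAt_legendre (hF _) (hF' _)).comp s (hu s).hasDerivAt
  rw [(hasDerivAt_flowX_left (hF' _) (hu s) t).deriv]
  refine ((hu.continuous.integral_hasStrictDerivAt 0 s).hasDerivAt.fun_add
    (hG.const_mul t)).congr_deriv ?_
  ring

theorem parArea_eq_areaPotential_sub (hF : ContDiff ℝ 2 F) (hu : ContDiff ℝ 1 u)
    (s₀ s₁ t : ℝ) :
    parArea F u s₀ s₁ t = areaPotential F u t s₁ - areaPotential F u t s₀ := by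
  have hF' : ContDiff ℝ 1 (deriv F) := hF.deriv'
  have hu' := hu.differentiable one_ne_zero
  have hF'' := hF'.differentiable one_ne_zero
  have hintegrand : (fun s => u s * deriv (fun r => flowX F u r t) s)
      = fun s => u s * (1 + deriv (deriv F) (u s) * deriv u s * t) := by
    funext s
    rw [(hasDerivAt_flowX_left (hF'' _) (hu' s) t).deriv]
  have hcont : Continuous (fun s => u s * deriv (fun r => flowX F u r t) s) := by
    rw [hintegrand]
    have := hF'.continuous_deriv le_rfl
    have := hu.continuous_deriv le_rfl
    fun_prop
  exact intervalIntegral.integral_eq_sub_of_hasDerivAt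
    (fun s _ => hasDerivAt_areaPotential_right (hF.differentiable two_ne_zero) hF'' hu' t s)
    (hcont.intervalIntegrable _ _)

theorem hasDerivAt_areaPotential_comp (hF : Differentiable ℝ F)
    (hF' : Differentiable ℝ (deriv F)) (hu : Differentiable ℝ u) {s : ℝ → ℝ} {t : ℝ}
    (hs : DifferentiableAt ℝ s t) :
    HasDerivAt (fun τ => areaPotential F u τ (s τ))
      (u (s t) * deriv (fun τ => flowX F u (s τ) τ) t - F (u (s t))) t := by
  have hus : HasDerivAt (fun τ => u (s τ)) (deriv u (s t) * deriv s t) t :=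
    (hu _).hasDerivAt.comp t hs.hasDerivAt
  have hG : HasDerivAt (fun τ => u (s τ) * deriv F (u (s τ)) - F (u (s τ)))
      (u (s t) * deriv (deriv F) (u (s t)) * (deriv u (s t) * deriv s t)) t :=
    (hasDerivAt_legendre (hF _) (hF' _)).comp t hus
  have hU : HasDerivAt (fun τ => ∫ r in (0 : ℝ)..s τ, u r) (u (s t) * deriv s t) t :=
    (hu.continuous.integral_hasStrictDerivAt 0 (s t)).hasDerivAt.comp t hs.hasDerivAt
  rw [(hasDerivAt_flowX_comp (hF' _) (hu _) hs).deriv]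
  refine (hU.fun_add ((hasDerivAt_id t).fun_mul hG)).congr_deriv ?_
  simp only [id_eq]
  ring

/-- **Generalized equal area principle, derivative identity.**
`A'(t) = (d/dt x(s₀(t),t))·(u(s₁(t)) − u(s₀(t))) + F(u(s₀(t))) − F(u(s₁(t)))`. -/
theorem parArea_hasDerivAt
    (F u : ℝ → ℝ) (hF : ContDiff ℝ 2 F) (hu : ContDiff ℝ 1 u)
    (a b : ℝ) (s₀ s₁ : ℝ → ℝ)
    (hs₀ : ContDiffOn ℝ 1 s₀ (Ioo a b)) (hs₁ : ContDiffOn ℝ 1 s₁ (Ioo a b))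
    (hline : ∀ t ∈ Ioo a b, flowX F u (s₀ t) t = flowX F u (s₁ t) t) :
    ∀ t ∈ Ioo a b, HasDerivAt (fun τ => parArea F u (s₀ τ) (s₁ τ) τ)
      ((deriv (fun τ => flowX F u (s₀ τ) τ) t) * (u (s₁ t) - u (s₀ t))
        + F (u (s₀ t)) - F (u (s₁ t))) t := by
  intro t ht
  have hI : Ioo a b ∈ nhds t := Ioo_mem_nhds ht.1 ht.2
  have hF₁ := hF.differentiable two_ne_zero
  have hF₂ := hF.deriv'.differentiable one_ne_zero
  have hu₁ := hu.differentiable one_ne_zero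
  have hP₀ := hasDerivAt_areaPotential_comp hF₁ hF₂ hu₁
    ((hs₀.differentiableOn one_ne_zero).differentiableAt hI)
  have hP₁ := hasDerivAt_areaPotential_comp hF₁ hF₂ hu₁
    ((hs₁.differentiableOn one_ne_zero).differentiableAt hI)
  have hspeed : deriv (fun τ => flowX F u (s₁ τ) τ) t = deriv (fun τ => flowX F u (s₀ τ) τ) t :=
    Filter.EventuallyEq.deriv_eq (Filter.eventually_of_mem hI fun τ hτ => (hline τ hτ).symm)
  simp only [parArea_eq_areaPotential_sub hF hu]
  refine (hP₁.fun_sub hP₀).congr_deriv ?_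
  rw [hspeed]
  ring
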